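/- For n ≥ 3, the set L = {-1} ∪ {1, 3, 5, ..., 4n-5} ∪ {4n-4} of integers induces as its sum graph a perfect matching on 2n vertices nK₂ (with no extra isolated vertices): the odd labels 1, 3, ..., 4n-5 are matched in pairs summing to 4n-4, the label 4n-4 is matched with -1, and there are no other edges. Consequently isd(nK₂) ≤ 4n-3. -/

import Mathlib

/-- The sum graph induced by a finite set `L` of integers: vertices are the elements of `L`,
with distinct `u, v` adjacent iff `u + v ∈ L`. -/
def sumGraph (L : Finset ℤ) : SimpleGraph {x : ℤ // x ∈ L} :=
  SimpleGraph.fromRel (fun a b => (a : ℤ) + b ∈ L)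

/-- `L` induces the graph `G` together with some isolated vertices:
there is an injective labeling `f` of the vertices of `G` by elements of `L` such that
adjacency in `G` corresponds exactly to the sum condition, and every label not used
for a vertex of `G` is isolated in the induced sum graph. -/
def IsSumLabeling {V : Type*} (G : SimpleGraph V) (L : Finset ℤ) : Prop :=
  ∃ f : V → ℤ, Function.Injective f ∧ (∀ v, f v ∈ L) ∧
    (∀ u v : V, G.Adj u v ↔ (f u ≠ f v ∧ f u + f v ∈ L)) ∧
    (∀ a ∈ L, a ∉ Set.range f → ∀ b ∈ L, b ≠ a → a + b ∉ L)

/-- The sum-diameter of `G`: the minimum of `max L - min L` over finite sets `L` of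
positive integers whose induced sum graph is `G` plus isolated vertices. -/
noncomputable def sumDiam {V : Type*} (G : SimpleGraph V) : ℕ :=
  sInf {d | ∃ L : Finset ℤ, (∀ x ∈ L, 0 < x) ∧ IsSumLabeling G L ∧
    ∃ hL : L.Nonempty, (L.max' hL - L.min' hL).toNat = d}

/-- The integral sum-diameter of `G`: labels may be arbitrary integers. -/
noncomputable def intSumDiam {V : Type*} (G : SimpleGraph V) : ℕ :=
  sInf {d | ∃ L : Finset ℤ, IsSumLabeling G L ∧
    ∃ hL : L.Nonempty, (L.max' hL - L.min' hL).toNat = d}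

/-- The sum number `σ(G)`: minimum number of isolated vertices that must be added to `G`
to obtain a sum graph. -/
noncomputable def sumNumber {V : Type*} [Fintype V] (G : SimpleGraph V) : ℕ :=
  sInf {k | ∃ L : Finset ℤ, (∀ x ∈ L, 0 < x) ∧ IsSumLabeling G L ∧
    L.card = Fintype.card V + k}

/-- The spum of `G`: minimum range over labelings using exactly `σ(G)` extra isolated
vertices. -/
noncomputable def spum {V : Type*} [Fintype V] (G : SimpleGraph V) : ℕ :=
  sInf {d | ∃ L : Finset ℤ, (∀ x ∈ L, 0 < x) ∧ IsSumLabeling G L ∧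
    L.card = Fintype.card V + sumNumber G ∧
    ∃ hL : L.Nonempty, (L.max' hL - L.min' hL).toNat = d}

/-- The perfect matching `nK₂`: `n` disjoint edges on `2n` vertices. -/
def matching (n : ℕ) : SimpleGraph (Fin n × Fin 2) :=
  SimpleGraph.fromRel (fun a b => a.1 = b.1)

/-! Odd plus odd is even, and the only even label is `4n - 4`, so two odd labels are adjacent
exactly when they sum to `4n - 4`, which pairs `2i + 1` with `4n - 5 - 2i`. Adding `-1` to an odd
label gives an even number below `4n - 4`, so `-1` sees only `4n - 4` (their sum is `4n - 5`), and
any other sum involving `4n - 4` exceeds it. Every label is used, so no isolated vertices appear,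
and the range of the labels is `4n - 3`. -/

namespace IsSumLabeling

variable {V : Type*} {G : SimpleGraph V} {L : Finset ℤ}

theorem of_forall_mem_range (f : V → ℤ) (hf : Function.Injective f) (hfL : ∀ v, f v ∈ L)
    (hadj : ∀ u v, G.Adj u v ↔ (f u ≠ f v ∧ f u + f v ∈ L))
    (hrange : ∀ a ∈ L, a ∈ Set.range f) :
    IsSumLabeling G L :=
  ⟨f, hf, hfL, hadj, fun a ha hna => (hna (hrange a ha)).elim⟩

theorem intSumDiam_le (h : IsSumLabeling G L) (hL : L.Nonempty) :
    intSumDiam G ≤ (L.max' hL - L.min' hL).toNat :=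
  Nat.sInf_le ⟨L, h, hL, rfl⟩

end IsSumLabeling

def matchingLabelSet (n : ℕ) : Finset ℤ :=
  {-1} ∪ ((Finset.range (2 * n - 2)).image (fun k : ℕ => 2 * (k : ℤ) + 1)) ∪ {4 * (n : ℤ) - 4}

theorem mem_matchingLabelSet {n : ℕ} {a : ℤ} :
    a ∈ matchingLabelSet n ↔ a = -1 ∨ a = 4 * n - 4 ∨ (a % 2 = 1 ∧ 1 ≤ a ∧ a ≤ 4 * n - 5) := by
  simp only [matchingLabelSet, Finset.mem_union, Finset.mem_singleton, Finset.mem_image,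
    Finset.mem_range]
  constructor
  · rintro ((rfl | ⟨k, hk, rfl⟩) | rfl) <;> omega
  · rintro (rfl | rfl | ⟨hodd, hlo, hhi⟩)
    · simp
    · simp
    · exact Or.inl (Or.inr ⟨((a - 1) / 2).toNat, by omega, by omega⟩)

theorem card_matchingLabelSet {n : ℕ} (hn : 1 ≤ n) : (matchingLabelSet n).card = 2 * n := by
  have hodd : ((Finset.range (2 * n - 2)).image (fun k : ℕ => 2 * (k : ℤ) + 1)).card =
      2 * n - 2 :=
    (Finset.card_image_of_injective _ fun a b h => by simpa using h).trans
      (Finset.card_range _)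
  rw [matchingLabelSet, ← Finset.insert_eq, Finset.union_singleton,
    Finset.card_insert_of_notMem, Finset.card_insert_of_notMem, hodd]
  · omega
  all_goals simp only [Finset.mem_insert, Finset.mem_image, Finset.mem_range]; omega

theorem matchingLabelSet_nonempty (n : ℕ) : (matchingLabelSet n).Nonempty :=
  ⟨-1, mem_matchingLabelSet.2 (Or.inl rfl)⟩

theorem matchingLabelSet_max'_sub_min' {n : ℕ} (hn : 1 ≤ n) :
    ((matchingLabelSet n).max' (matchingLabelSet_nonempty n) -
      (matchingLabelSet n).min' (matchingLabelSet_nonempty n)).toNat = 4 * n - 3 := by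
  have hmax : (matchingLabelSet n).max' (matchingLabelSet_nonempty n) = 4 * n - 4 :=
    le_antisymm
      (Finset.max'_le _ _ _ fun b hb => by rw [mem_matchingLabelSet] at hb; omega)
      (Finset.le_max' _ _ (mem_matchingLabelSet.2 (Or.inr (Or.inl rfl))))
  have hmin : (matchingLabelSet n).min' (matchingLabelSet_nonempty n) = -1 :=
    le_antisymm
      (Finset.min'_le _ _ (mem_matchingLabelSet.2 (Or.inl rfl)))
      (Finset.le_min' _ _ _ fun b hb => by rw [mem_matchingLabelSet] at hb; omega)
  rw [hmax, hmin]
  omega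

/-- The last edge is labelled `{-1, 4n - 4}`; the edge `i < n - 1` is labelled
`{2i + 1, 4n - 5 - 2i}`. -/
def matchingLabel (n : ℕ) (v : Fin n × Fin 2) : ℤ :=
  if v.1.val = n - 1 then (if v.2.val = 0 then -1 else 4 * n - 4)
  else (if v.2.val = 0 then 2 * v.1.val + 1 else 4 * n - 5 - 2 * v.1.val)

theorem matchingLabel_injective (n : ℕ) : Function.Injective (matchingLabel n) := by
  rintro ⟨⟨i, hi⟩, ⟨s, hs⟩⟩ ⟨⟨j, hj⟩, ⟨t, ht⟩⟩ h
  simp only [matchingLabel] at h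
  have : i = j ∧ s = t := by split_ifs at h <;> omega
  simp [this.1, this.2]

theorem matchingLabel_mem (n : ℕ) (v : Fin n × Fin 2) :
    matchingLabel n v ∈ matchingLabelSet n := by
  obtain ⟨⟨i, hi⟩, ⟨s, hs⟩⟩ := v
  rw [mem_matchingLabelSet, matchingLabel]
  split_ifs <;> omega

theorem mem_range_matchingLabel {n : ℕ} (hn : 1 ≤ n) {a : ℤ} (ha : a ∈ matchingLabelSet n) :
    a ∈ Set.range (matchingLabel n) := by
  rw [mem_matchingLabelSet] at ha
  rcases ha with rfl | rfl | ⟨hodd, hlo, hhi⟩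
  · exact ⟨(⟨n - 1, by omega⟩, 0), by simp [matchingLabel]⟩
  · exact ⟨(⟨n - 1, by omega⟩, 1), by simp [matchingLabel]⟩
  · by_cases hsmall : a ≤ 2 * n - 3
    · refine ⟨(⟨((a - 1) / 2).toNat, by omega⟩, 0), ?_⟩
      simp only [matchingLabel]
      split_ifs <;> omega
    · refine ⟨(⟨((4 * n - 5 - a) / 2).toNat, by omega⟩, 1), ?_⟩
      simp only [matchingLabel]
      split_ifs <;> simp_all <;> omega

theorem matching_adj_iff_matchingLabel {n : ℕ} (u v : Fin n × Fin 2) :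
    (matching n).Adj u v ↔ (matchingLabel n u ≠ matchingLabel n v ∧
      matchingLabel n u + matchingLabel n v ∈ matchingLabelSet n) := by
  obtain ⟨⟨i, hi⟩, ⟨s, hs⟩⟩ := u
  obtain ⟨⟨j, hj⟩, ⟨t, ht⟩⟩ := v
  rw [mem_matchingLabelSet]
  simp only [matching, SimpleGraph.fromRel_adj, matchingLabel, ne_eq, Prod.mk.injEq,
    Fin.mk.injEq]
  split_ifs <;> omega

/-- For `n ≥ 3`, the set `L = {-1} ∪ {1, 3, ..., 4n-5} ∪ {4n-4}` induces the perfect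
matching `nK₂` with no extra isolated vertices; consequently `isd(nK₂) ≤ 4n - 3`. -/
theorem stmt11 (n : ℕ) (hn : 3 ≤ n) :
    let L : Finset ℤ := {-1} ∪
      ((Finset.range (2 * n - 2)).image (fun k : ℕ => 2 * (k : ℤ) + 1)) ∪ {4 * (n : ℤ) - 4}
    IsSumLabeling (matching n) L ∧ L.card = 2 * n ∧
    intSumDiam (matching n) ≤ 4 * n - 3 := by
  show IsSumLabeling (matching n) (matchingLabelSet n) ∧ (matchingLabelSet n).card = 2 * n ∧
    intSumDiam (matching n) ≤ 4 * n - 3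
  have hlab : IsSumLabeling (matching n) (matchingLabelSet n) :=
    .of_forall_mem_range (matchingLabel n) (matchingLabel_injective n) (matchingLabel_mem n)
      matching_adj_iff_matchingLabel fun _ => mem_range_matchingLabel (by omega)
  refine ⟨hlab, card_matchingLabelSet (by omega), ?_⟩
  calc intSumDiam (matching n)
      ≤ _ := hlab.intSumDiam_le (matchingLabelSet_nonempty n)
    _ = 4 * n - 3 := matchingLabelSet_max'_sub_min' (by omega)
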